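/- arXiv:1004.5136 — 2 statements merged into one kernel-verified Lean document; each statement's English description precedes it below -/
import Mathlib

section
/- Let J: ℝ → ℝ be continuous and 1-periodic. For N ∈ ℕ with N ≥ 1 and h = 1/N, let A_N be the N×N matrix with entries a_{j,i} = h·J(|j−i|·h) for j ≠ i and a_{j,j} = h·[J(0) − ∑_{r=1}^{N} J(|j−r|·h)], and for fixed k ∈ ℕ, k ≥ 1, let λ_k^{(N)} = −(a_{1,1} + a_{1,2} W_k + ⋯ + a_{1,N} W_k^{N−1}) with W_k = exp(2πik/N) denote the k-th eigenvalue of −A_N. Then lim_{N→∞} λ_k^{(N)} = ∫₀¹ J(x) dx − ∫₀¹ J(x) exp(2πikx) dx. -/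
/-!
Since `W_k^m = exp (2πik · m/N)`, the `m = 0` correction term of `A_N` turns `λ_k^{(N)}` into the
difference of the left Riemann sums of `J` and of `x ↦ J x · exp (2πikx)` on the grid `m/N`.
Both Riemann sums converge to the integrals because a continuous function is uniformly
continuous on `[0, 1]`.
-/

open MeasureTheory Filter Finset Topology

section RiemannSum

variable {E : Type*} [NormedAddCommGroup E] [NormedSpace ℝ E] [CompleteSpace E]

noncomputable def leftRiemannSum (f : ℝ → E) (N : ℕ) : E :=
  ∑ m ∈ range N, (N : ℝ)⁻¹ • f (m / N)

theorem norm_smul_sub_intervalIntegral_le {f : ℝ → E} {a b C : ℝ} (hab : a ≤ b)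
    (hf : IntervalIntegrable f volume a b) (hC : ∀ x ∈ Set.Ioc a b, ‖f a - f x‖ ≤ C) :
    ‖(b - a) • f a - ∫ x in a..b, f x‖ ≤ C * (b - a) := by
  rw [← intervalIntegral.integral_const,
    ← intervalIntegral.integral_sub intervalIntegrable_const hf]
  calc _ ≤ C * |b - a| :=
        intervalIntegral.norm_integral_le_of_norm_le_const (by rwa [Set.uIoc_of_le hab])
    _ = C * (b - a) := by rw [abs_of_nonneg (sub_nonneg.2 hab)]

theorem tendsto_leftRiemannSum {f : ℝ → E} (hf : ContinuousOn f (Set.Icc 0 1)) :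
    Tendsto (leftRiemannSum f) atTop (𝓝 (∫ x in (0 : ℝ)..1, f x)) := by
  rw [Metric.tendsto_atTop]
  intro ε hε
  obtain ⟨δ, hδ, hδf⟩ := Metric.uniformContinuousOn_iff.mp
    (isCompact_Icc.uniformContinuousOn_of_continuous hf) (ε / 2) (half_pos hε)
  obtain ⟨n₀, hn₀⟩ := exists_nat_one_div_lt hδ
  refine ⟨n₀ + 1, fun N hN₀ => ?_⟩
  have hN : (0 : ℝ) < N := by exact_mod_cast Nat.lt_of_lt_of_le n₀.succ_pos hN₀
  have hmesh : (N : ℝ)⁻¹ < δ := by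
    refine lt_of_le_of_lt ?_ hn₀
    rw [one_div]
    gcongr
    exact_mod_cast hN₀
  set x : ℕ → ℝ := fun m => m / N with hx
  have hx_mem : ∀ m ≤ N, x m ∈ Set.Icc (0 : ℝ) 1 := fun m hm =>
    ⟨by positivity, div_le_one_of_le₀ (by exact_mod_cast hm) hN.le⟩
  have hcell : ∀ m ∈ range N,
      ‖(N : ℝ)⁻¹ • f (x m) - ∫ t in x m..x (m + 1), f t‖ ≤ ε / 2 * (N : ℝ)⁻¹ := by
    intro m hm
    have hm := mem_range.1 hm
    have hstep : x (m + 1) - x m = (N : ℝ)⁻¹ := by simp only [hx]; push_cast; field_simp; ring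
    have hsub : Set.Icc (x m) (x (m + 1)) ⊆ Set.Icc 0 1 :=
      Set.Icc_subset_Icc (hx_mem m hm.le).1 (hx_mem (m + 1) hm).2
    have hle : x m ≤ x (m + 1) := by linarith [inv_pos.2 hN]
    rw [← hstep]
    refine norm_smul_sub_intervalIntegral_le hle
      ((hf.mono (Set.uIcc_of_le hle ▸ hsub)).intervalIntegrable) fun t ht => ?_
    rw [← dist_eq_norm]
    refine (hδf _ (hsub ⟨le_rfl, hle⟩) t (hsub (Set.Ioc_subset_Icc_self ht)) ?_).le
    rw [Real.dist_eq, abs_sub_comm, abs_of_pos (sub_pos.2 ht.1)]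
    linarith [ht.2]
  have hint : ∫ t in (0 : ℝ)..1, f t = ∑ m ∈ range N, ∫ t in x m..x (m + 1), f t := by
    rw [intervalIntegral.sum_integral_adjacent_intervals fun m hm =>
      ContinuousOn.intervalIntegrable (hf.mono ?_)]
    · simp [hx, hN.ne']
    · rw [Set.uIcc_of_le (div_le_div_of_nonneg_right (by simp) hN.le)]
      exact Set.Icc_subset_Icc (hx_mem m hm.le).1 (hx_mem (m + 1) hm).2
  calc dist (leftRiemannSum f N) (∫ t in (0 : ℝ)..1, f t)
      = ‖∑ m ∈ range N, ((N : ℝ)⁻¹ • f (x m) - ∫ t in x m..x (m + 1), f t)‖ := by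
        rw [dist_eq_norm, hint, leftRiemannSum, sum_sub_distrib]
    _ ≤ ∑ m ∈ range N, ε / 2 * (N : ℝ)⁻¹ := norm_sum_le_of_le _ hcell
    _ = ε / 2 := by rw [sum_const, card_range, nsmul_eq_mul]; field_simp
    _ < ε := half_lt_self hε

end RiemannSum

/-- The entry `a_{1,m+1}` of `A_N` (rows and columns indexed from `1`, `m` from `0`). -/
noncomputable def firstRowEntry (J : ℝ → ℝ) (N m : ℕ) : ℝ :=
  if m = 0 then (1 / (N : ℝ)) * (J 0 - ∑ r : Fin N, J ((r : ℝ) * (1 / (N : ℝ))))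
  else (1 / (N : ℝ)) * J ((m : ℝ) * (1 / (N : ℝ)))

noncomputable def circulantEigenvalue (J : ℝ → ℝ) (k : ℂ) (N : ℕ) : ℂ :=
  -∑ m : Fin N, (firstRowEntry J N m : ℂ) * Complex.exp (2 * Real.pi * Complex.I * k / N) ^ (m : ℕ)

theorem circulantEigenvalue_eq_sub_leftRiemannSum (J : ℝ → ℝ) (k : ℂ) {N : ℕ} (hN : 0 < N) :
    circulantEigenvalue J k N =
      leftRiemannSum (fun x => (J x : ℂ)) N -
        leftRiemannSum (fun x => (J x : ℂ) * Complex.exp (2 * Real.pi * Complex.I * k * x)) N := by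
  set W := Complex.exp (2 * Real.pi * Complex.I * k / N)
  set e : ℝ → ℂ := fun x => (J x : ℂ) * Complex.exp (2 * Real.pi * Complex.I * k * x)
  have hterm : ∀ m : ℕ, (firstRowEntry J N m : ℂ) * W ^ m =
      (N : ℝ)⁻¹ • e (m / N) - if m = 0 then leftRiemannSum (fun x => (J x : ℂ)) N else 0 := by
    intro m
    have hW : W ^ m = Complex.exp (2 * Real.pi * Complex.I * k * ((m / N : ℝ) : ℂ)) := by
      rw [← Complex.exp_nat_mul]
      push_cast
      ring_nf
    rw [hW, firstRowEntry]
    split_ifs with hm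
    · subst hm
      simp only [leftRiemannSum, Fin.sum_univ_eq_sum_range (fun r => J (r * (1 / N)))]
      simp [e, div_eq_mul_inv, mul_sub, mul_sum]
    · simp [e, div_eq_mul_inv]
      ring
  rw [circulantEigenvalue, Fin.sum_univ_eq_sum_range (fun m => (firstRowEntry J N m : ℂ) * W ^ m)]
  simp only [hterm]
  rw [sum_sub_distrib, sum_ite_eq', if_pos (mem_range.2 hN), neg_sub]
  rfl

theorem stmt6_general (J : ℝ → ℝ) (hcont : Continuous J)
    (k : ℕ)
    (lam : ℕ → ℂ)
    (hlam : ∀ N : ℕ, 0 < N → lam N =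
      -(∑ m : Fin N,
        (((if (m : ℕ) = 0 then
            (1 / (N : ℝ)) * (J 0 - ∑ r : Fin N, J ((r : ℝ) * (1 / (N : ℝ))))
          else (1 / (N : ℝ)) * J ((m : ℝ) * (1 / (N : ℝ)))) : ℝ) : ℂ) *
        (Complex.exp (2 * (Real.pi : ℂ) * Complex.I * (k : ℂ) / (N : ℂ))) ^ (m : ℕ))) :
    Filter.Tendsto lam Filter.atTop
      (nhds ((((∫ x in (0:ℝ)..1, J x) : ℝ) : ℂ) -
        ∫ x in (0:ℝ)..1,
          (J x : ℂ) * Complex.exp (2 * (Real.pi : ℂ) * Complex.I * (k : ℂ) * (x : ℂ)))) := by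
  have hlim := (tendsto_leftRiemannSum (f := fun x => (J x : ℂ)) (by fun_prop)).sub
    (tendsto_leftRiemannSum (f := fun x => (J x : ℂ) *
      Complex.exp (2 * Real.pi * Complex.I * k * x)) (by fun_prop))
  rw [intervalIntegral.integral_ofReal] at hlim
  refine hlim.congr' ?_
  filter_upwards [eventually_gt_atTop 0] with N hN
  rw [hlam N hN]
  exact (circulantEigenvalue_eq_sub_leftRiemannSum J k hN).symm

/-- Convergence of the k-th eigenvalue of `-A_N` to the eigenvalue of the
limiting nonlocal operator as `N → ∞`. -/
theorem stmt6 (J : ℝ → ℝ) (hcont : Continuous J) (hper : ∀ x, J (x + 1) = J x)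
    (k : ℕ) (hk : 1 ≤ k)
    (lam : ℕ → ℂ)
    (hlam : ∀ N : ℕ, 0 < N → lam N =
      -(∑ m : Fin N,
        (((if (m : ℕ) = 0 then
            (1 / (N : ℝ)) * (J 0 - ∑ r : Fin N, J ((r : ℝ) * (1 / (N : ℝ))))
          else (1 / (N : ℝ)) * J ((m : ℝ) * (1 / (N : ℝ)))) : ℝ) : ℂ) *
        (Complex.exp (2 * (Real.pi : ℂ) * Complex.I * (k : ℂ) / (N : ℂ))) ^ (m : ℕ))) :
    Filter.Tendsto lam Filter.atTop
      (nhds ((((∫ x in (0:ℝ)..1, J x) : ℝ) : ℂ) -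
        ∫ x in (0:ℝ)..1,
          (J x : ℂ) * Complex.exp (2 * (Real.pi : ℂ) * Complex.I * (k : ℂ) * (x : ℂ)))) :=
  stmt6_general J hcont k lam hlam
end

section
/- Let J: ℝ → ℝ be continuous, 1-periodic, nonnegative, with ∫₀¹ J(x) dx = 1, let f(u) = u(1 − u²), and suppose ε > 1. If u: ℝ → ℝ is a bounded, measurable, 1-periodic function satisfying the steady-state equation 0 = ε ∫₀¹ J(x−y)(u(y) − u(x)) dy + f(u(x)) for every x ∈ ℝ, then u is continuous. (The point is that for ε > 1 the map v ↦ εv − f(v) is strictly increasing on ℝ with continuous inverse, while x ↦ ε∫₀¹ J(x−y)u(y) dy is continuous.) -/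
open MeasureTheory Filter Function Set

/-!
Integrating the kernel against the constant `u x` and using `∫₀¹ J = 1`, the steady-state equation
becomes `(ε - 1) u(x) + u(x)³ = ε ∫₀¹ J(x - y) u(y) dy`. The right-hand side is continuous in `x`
by dominated convergence, and for `ε ≥ 1` the map `v ↦ (ε - 1) v + v³` is a strictly increasing
bijection of `ℝ`, hence an order isomorphism, hence a homeomorphism; so `u` is continuous.
-/

theorem Function.Periodic.intervalIntegral_comp_sub_left {f : ℝ → ℝ} {T : ℝ}
    (hf : Periodic f T) (x : ℝ) : ∫ y in (0 : ℝ)..T, f (x - y) = ∫ y in (0 : ℝ)..T, f y := by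
  rw [intervalIntegral.integral_comp_sub_left, sub_zero]
  simpa using hf.intervalIntegral_add_eq (x - T) 0

theorem continuous_intervalIntegral_comp_sub_mul {J u : ℝ → ℝ} {a b : ℝ} (hJc : Continuous J)
    (hJb : Bornology.IsBounded (range J)) (hu : IntervalIntegrable u volume a b) :
    Continuous fun x => ∫ y in a..b, J (x - y) * u y := by
  obtain ⟨M, hM⟩ := isBounded_iff_forall_norm_le.mp hJb
  refine intervalIntegral.continuous_of_dominated_interval (bound := fun y => M * ‖u y‖)
    (fun x => ?_) (fun x => ae_of_all _ fun y _ => ?_) (hu.norm.const_mul M)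
    (ae_of_all _ fun y _ => by fun_prop)
  · exact (hJc.comp (continuous_const.sub continuous_id)).aestronglyMeasurable.mul
      hu.def'.aestronglyMeasurable
  · rw [norm_mul]
    exact mul_le_mul_of_nonneg_right (hM _ (mem_range_self _)) (norm_nonneg _)

theorem mul_add_pow_three_eq_of_steady_state {J u : ℝ → ℝ} {T ε x : ℝ} (hJc : Continuous J)
    (hJper : Periodic J T) (hJnorm : ∫ y in (0 : ℝ)..T, J y = 1)
    (hu : IntervalIntegrable u volume 0 T)
    (hss : 0 = ε * (∫ y in (0 : ℝ)..T, J (x - y) * (u y - u x)) + u x * (1 - u x ^ 2)) :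
    (ε - 1) * u x + u x ^ 3 = ε * ∫ y in (0 : ℝ)..T, J (x - y) * u y := by
  have hJx : Continuous fun y => J (x - y) := by fun_prop
  have hsplit : ∫ y in (0 : ℝ)..T, J (x - y) * (u y - u x)
      = (∫ y in (0 : ℝ)..T, J (x - y) * u y) - u x := by
    simp_rw [mul_sub]
    rw [intervalIntegral.integral_sub (hu.continuousOn_mul hJx.continuousOn)
      ((hJx.intervalIntegrable _ _).mul_const _), intervalIntegral.integral_mul_const,
      hJper.intervalIntegral_comp_sub_left, hJnorm, one_mul]
  rw [hsplit] at hss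
  linear_combination hss

theorem strictMono_mul_add_pow_three {a : ℝ} (ha : 0 ≤ a) : StrictMono fun v : ℝ => a * v + v ^ 3 :=
  (monotone_id.const_mul ha).add_strictMono (Odd.strictMono_pow (by decide))

theorem surjective_mul_add_pow_three {a : ℝ} (ha : 0 ≤ a) : Surjective fun v : ℝ => a * v + v ^ 3 := by
  refine Continuous.surjective (by fun_prop) (tendsto_atTop_mono' _ ?_ tendsto_id)
    (tendsto_atBot_mono' _ ?_ tendsto_id)
  · filter_upwards [eventually_ge_atTop 1] with v hv
    rw [id]
    nlinarith [mul_nonneg ha (zero_le_one.trans hv), mul_nonneg (sub_nonneg.2 hv) (sq_nonneg v)]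
  · filter_upwards [eventually_le_atBot (-1)] with v hv
    rw [id]
    nlinarith [mul_nonneg ha (by linarith : 0 ≤ -v), mul_nonneg (by linarith : 0 ≤ -1 - v) (sq_nonneg v)]

theorem StrictMono.continuous_of_continuous_comp {α β X : Type*} [LinearOrder α]
    [TopologicalSpace α] [OrderTopology α] [LinearOrder β] [TopologicalSpace β] [OrderTopology β]
    [TopologicalSpace X] {φ : α → β} {u : X → α} (hφ : StrictMono φ) (hsurj : Surjective φ)
    (h : Continuous (φ ∘ u)) : Continuous u := by
  let e := hφ.orderIsoOfSurjective φ hsurj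
  have hu : u = e.symm ∘ φ ∘ u := funext fun x => (e.symm_apply_apply (u x)).symm
  rw [hu]
  exact e.symm.continuous.comp h

theorem stmt13_general (J : ℝ → ℝ) (hJc : Continuous J) (hJper : ∀ x, J (x + 1) = J x)
    (hJnorm : ∫ x in (0:ℝ)..1, J x = 1)
    (ε : ℝ) (hε : 1 < ε)
    (u : ℝ → ℝ) (hum : Measurable u) (hub : ∃ C, ∀ x, |u x| ≤ C)
    (hss : ∀ x : ℝ,
      0 = ε * (∫ y in (0:ℝ)..1, J (x - y) * (u y - u x)) + u x * (1 - u x ^ 2)) :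
    Continuous u := by
  obtain ⟨C, hC⟩ := hub
  have hu : IntervalIntegrable u volume 0 1 :=
    (intervalIntegrable_const (c := C)).mono_fun' hum.aestronglyMeasurable (ae_of_all _ hC)
  have hJb : Bornology.IsBounded (range J) :=
    Periodic.isBounded_of_continuous hJper one_ne_zero hJc
  have hφu : (fun v => (ε - 1) * v + v ^ 3) ∘ u
      = fun x => ε * ∫ y in (0:ℝ)..1, J (x - y) * u y :=
    funext fun x => mul_add_pow_three_eq_of_steady_state hJc hJper hJnorm hu (hss x)
  have hε' : 0 ≤ ε - 1 := sub_nonneg.2 hε.le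
  refine (strictMono_mul_add_pow_three hε').continuous_of_continuous_comp
    (surjective_mul_add_pow_three hε') ?_
  rw [hφu]
  exact (continuous_intervalIntegral_comp_sub_mul hJc hJb hu).const_mul ε

/-- For `ε > 1`, every bounded measurable 1-periodic steady state of the
nonlocal bistable equation with `f(u) = u(1 - u²)` is continuous. -/
theorem stmt13 (J : ℝ → ℝ) (hJc : Continuous J) (hJper : ∀ x, J (x + 1) = J x)
    (hJnn : ∀ x, 0 ≤ J x) (hJnorm : ∫ x in (0:ℝ)..1, J x = 1)
    (ε : ℝ) (hε : 1 < ε)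
    (u : ℝ → ℝ) (hum : Measurable u) (hub : ∃ C, ∀ x, |u x| ≤ C)
    (huper : ∀ x, u (x + 1) = u x)
    (hss : ∀ x : ℝ,
      0 = ε * (∫ y in (0:ℝ)..1, J (x - y) * (u y - u x)) + u x * (1 - u x ^ 2)) :
    Continuous u :=
  stmt13_general J hJc hJper hJnorm ε hε u hum hub hss
end
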